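/- arXiv:1110.1467 — 4 statements merged into one kernel-verified Lean document; each statement's English description precedes it below -/
import Mathlib

section
/- Let R be a commutative ring, ξ ∈ R a unit, and integers a ≤ b with n = b − a + 1. The assignment S_i ↦ −1 (for 1 ≤ i ≤ n−1) and X_j ↦ ξ^{b−j+1} (for 1 ≤ j ≤ n) extends to a unital R-algebra homomorphism from the affine Hecke algebra H_R(n, ξ) to R. -/
/-- Generators of the affine Hecke algebra of type `A_{n-1}`:
`S 0, …, S (n-2)` and `X 0, …, X (n-1)` together with formal inverses `Xinv j`
(0-indexed versions of `S_1, …, S_{n-1}` and `X_1^{±1}, …, X_n^{±1}`). -/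
inductive HGen (n : ℕ) : Type
  | S : Fin (n - 1) → HGen n
  | X : Fin n → HGen n
  | Xinv : Fin n → HGen n

open FreeAlgebra

/-- The defining relations of the affine Hecke algebra `H_R(n, ξ)` of type `A_{n-1}`
with parameter `ξ`, imposed on the free algebra on the generators (0-indexed). -/
inductive HeckeRel (R : Type*) [CommRing R] (ξ : R) (n : ℕ) :
    FreeAlgebra R (HGen n) → FreeAlgebra R (HGen n) → Prop
  | quad (i : Fin (n - 1)) :
      HeckeRel R ξ n ((ι R (HGen.S i) + 1) *
        (ι R (HGen.S i) - algebraMap R (FreeAlgebra R (HGen n)) ξ)) 0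
  | scomm (i j : Fin (n - 1)) (h : (i : ℕ) + 2 ≤ (j : ℕ) ∨ (j : ℕ) + 2 ≤ (i : ℕ)) :
      HeckeRel R ξ n (ι R (HGen.S i) * ι R (HGen.S j)) (ι R (HGen.S j) * ι R (HGen.S i))
  | braid (i j : Fin (n - 1)) (h : (j : ℕ) = (i : ℕ) + 1) :
      HeckeRel R ξ n (ι R (HGen.S i) * ι R (HGen.S j) * ι R (HGen.S i))
        (ι R (HGen.S j) * ι R (HGen.S i) * ι R (HGen.S j))
  | xcomm (i j : Fin n) :
      HeckeRel R ξ n (ι R (HGen.X i) * ι R (HGen.X j)) (ι R (HGen.X j) * ι R (HGen.X i))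
  | xs (j : Fin n) (i : Fin (n - 1)) (h : (j : ℕ) ≠ (i : ℕ) ∧ (j : ℕ) ≠ (i : ℕ) + 1) :
      HeckeRel R ξ n (ι R (HGen.X j) * ι R (HGen.S i)) (ι R (HGen.S i) * ι R (HGen.X j))
  | sxs (i : Fin (n - 1)) (j j' : Fin n) (hj : (j : ℕ) = (i : ℕ))
      (hj' : (j' : ℕ) = (i : ℕ) + 1) :
      HeckeRel R ξ n (ι R (HGen.S i) * ι R (HGen.X j) * ι R (HGen.S i))
        (algebraMap R (FreeAlgebra R (HGen n)) ξ * ι R (HGen.X j'))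
  | xinv_right (j : Fin n) : HeckeRel R ξ n (ι R (HGen.X j) * ι R (HGen.Xinv j)) 1
  | xinv_left (j : Fin n) : HeckeRel R ξ n (ι R (HGen.Xinv j) * ι R (HGen.X j)) 1

/-- The affine Hecke algebra `H_R(n, ξ)` of type `A_{n-1}` with parameter `ξ`. -/
abbrev HeckeAlgebra (R : Type*) [CommRing R] (ξ : R) (n : ℕ) : Type _ :=
  RingQuot (HeckeRel R ξ n)

/-- The generator `S_i` of `H_R(n, ξ)` (0-indexed: `i = 0, …, n-2`). -/
def eS (R : Type*) [CommRing R] (ξ : R) (n : ℕ) (i : Fin (n - 1)) : HeckeAlgebra R ξ n :=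
  RingQuot.mkAlgHom R (HeckeRel R ξ n) (ι R (HGen.S i))

/-- The generator `X_j` of `H_R(n, ξ)` (0-indexed: `j = 0, …, n-1`). -/
def eX (R : Type*) [CommRing R] (ξ : R) (n : ℕ) (j : Fin n) : HeckeAlgebra R ξ n :=
  RingQuot.mkAlgHom R (HeckeRel R ξ n) (ι R (HGen.X j))

/-- The generator `X_j^{-1}` of `H_R(n, ξ)` (0-indexed). -/
def eXinv (R : Type*) [CommRing R] (ξ : R) (n : ℕ) (j : Fin n) : HeckeAlgebra R ξ n :=
  RingQuot.mkAlgHom R (HeckeRel R ξ n) (ι R (HGen.Xinv j))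

/-- For integers `a ≤ b` with `n = b - a + 1`, the assignment `S_i ↦ -1`,
`X_j ↦ ξ^{b-j+1}` (1-indexed; here 0-indexed as `X_j ↦ ξ^{b-j}`) extends to a unital
`R`-algebra homomorphism `H_R(n, ξ) → R` (the character `L(a,b)`). -/
theorem stmt8 (R : Type*) [CommRing R] (ξ : Rˣ) (a b : ℤ) (hab : a ≤ b)
    (n : ℕ) (hn : (n : ℤ) = b - a + 1) :
    ∃ φ : HeckeAlgebra R (ξ : R) n →ₐ[R] R,
      (∀ i : Fin (n - 1), φ (eS R (ξ : R) n i) = (-1 : R)) ∧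
      (∀ j : Fin n, φ (eX R (ξ : R) n j) = ((ξ ^ (b - (j : ℤ)) : Rˣ) : R)) := by
  classical
  set f : HGen n → R := fun g =>
    match g with
    | HGen.S _ => (-1 : R)
    | HGen.X j => ((ξ ^ (b - (j : ℤ)) : Rˣ) : R)
    | HGen.Xinv j => ((ξ ^ ((j : ℤ) - b) : Rˣ) : R) with hf
  have hrel : ∀ ⦃x y : FreeAlgebra R (HGen n)⦄, HeckeRel R (ξ : R) n x y →
      FreeAlgebra.lift R f x = FreeAlgebra.lift R f y := by
    intro x y h
    induction h with
    | quad i => simp [hf]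
    | scomm i j h => simp [hf, mul_comm]
    | braid i j h => simp [hf]
    | xcomm i j => simp [hf, mul_comm]
    | xs j i h => simp [hf, mul_comm]
    | sxs i j j' hj hj' =>
        simp only [map_mul, FreeAlgebra.lift_ι_apply, AlgHom.commutes,
          Algebra.algebraMap_self_apply, hf]
        have : (b - (j : ℤ)) = 1 + (b - (j' : ℤ)) := by omega
        rw [this, zpow_add, zpow_one]
        push_cast
        ring
    | xinv_right j =>
        simp only [map_mul, map_one, FreeAlgebra.lift_ι_apply, hf]
        rw [← Units.val_mul, ← zpow_add]
        norm_num
    | xinv_left j =>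
        simp only [map_mul, map_one, FreeAlgebra.lift_ι_apply, hf]
        rw [← Units.val_mul, ← zpow_add]
        norm_num
  refine ⟨RingQuot.liftAlgHom R ⟨FreeAlgebra.lift R f, hrel⟩, ?_, ?_⟩
  · intro i
    rw [eS, RingQuot.liftAlgHom_mkAlgHom_apply]
    simp [hf]
  · intro j
    rw [eX, RingQuot.liftAlgHom_mkAlgHom_apply]
    simp [hf]
end

section
/- Let 𝔪 be a finite multiset of integer segments [a, b] (a ≤ b, a,b ∈ ℤ). For i ≥ 1 define 𝔪^{(i)} as the multiset of integers {b − i + 1 : [a,b] ∈ 𝔪 with b − a + 1 ≥ i} (counted with multiplicity). Then the map 𝔪 ↦ (𝔪^{(1)}, 𝔪^{(2)}, 𝔪^{(3)}, …) is injective: two multisets of segments with the same sequence of multisets 𝔪^{(i)} for all i ≥ 1 are equal. -/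
/-- An integer segment `[a, b]` with `a ≤ b`. -/
def Seg : Type := {p : ℤ × ℤ // p.1 ≤ p.2}

instance : DecidableEq Seg := by unfold Seg; infer_instance

/-- For a multisegment `m` (finite multiset of segments) and `i ≥ 1`, `level m i` is the
multiset `m^{(i)}` of integers `b - i + 1` over the segments `[a, b]` of `m` of length
`b - a + 1 ≥ i`, counted with multiplicity. -/
def level (m : Multiset Seg) (i : ℕ) : Multiset ℤ :=
  (m.filter (fun s => (i : ℤ) ≤ s.1.2 - s.1.1 + 1)).map (fun s => s.1.2 - (i : ℤ) + 1)

lemma countP_split (m : Multiset Seg) (p q r : Seg → Prop)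
    [DecidablePred p] [DecidablePred q] [DecidablePred r]
    (h : ∀ s, p s ↔ (q s ∨ r s)) (h2 : ∀ s, ¬(q s ∧ r s)) :
    m.countP p = m.countP q + m.countP r := by
  induction m using Multiset.induction_on with
  | empty => simp
  | cons a t ih =>
      simp only [Multiset.countP_cons]
      have := h a; have := h2 a
      by_cases hq : q a <;> by_cases hr : r a <;> by_cases hp : p a <;> simp_all <;> omega

lemma count_level (m : Multiset Seg) (i : ℕ) (hi : 1 ≤ i) (x : ℤ) :
    (level m i).count x = m.countP (fun s => s.1.2 = x + i - 1 ∧ s.1.1 ≤ x) := by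
  rw [level, Multiset.count_map, Multiset.filter_filter, ← Multiset.countP_eq_card_filter]
  apply Multiset.countP_congr rfl
  intro s _
  have := s.2
  rw [eq_iff_iff]
  constructor
  · rintro ⟨h1, h2⟩; omega
  · rintro ⟨h1, h2⟩; omega

lemma count_eq (m : Multiset Seg) (s0 : Seg) :
    (level m (s0.1.2 - s0.1.1 + 1).toNat).count s0.1.1 =
      (level m ((s0.1.2 - s0.1.1 + 1).toNat + 1)).count (s0.1.1 - 1) + m.count s0 := by
  have hab := s0.2
  set i := (s0.1.2 - s0.1.1 + 1).toNat with hidef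
  have hi1 : 1 ≤ i := by omega
  have hic : (i : ℤ) = s0.1.2 - s0.1.1 + 1 := by omega
  rw [count_level m i hi1, count_level m (i + 1) (by omega)]
  rw [show m.count s0 = m.countP (s0 = ·) from rfl]
  rw [countP_split m _ (fun s => s.1.2 = s0.1.1 + (i : ℤ) - 1 ∧ s.1.1 ≤ s0.1.1 - 1)
    (fun s => s0 = s) ?_ ?_]
  · congr 1
    apply Multiset.countP_congr rfl
    intro s _
    rw [eq_iff_iff]
    push_cast
    constructor
    · rintro ⟨h1, h2⟩; exact ⟨by omega, by omega⟩
    · rintro ⟨h1, h2⟩; exact ⟨by omega, by omega⟩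
  · intro s
    constructor
    · rintro ⟨h1, h2⟩
      rcases lt_or_eq_of_le h2 with h3 | h3
      · exact Or.inl ⟨h1, by omega⟩
      · refine Or.inr (Subtype.ext (Prod.ext_iff.mpr ⟨by omega, by omega⟩)).symm
    · rintro (⟨h1, h2⟩ | h1)
      · exact ⟨h1, by omega⟩
      · subst h1; exact ⟨by omega, le_refl _⟩
  · rintro s ⟨⟨h1, h2⟩, h3⟩
    subst h3
    omega

/-- The map `𝔪 ↦ (𝔪^{(1)}, 𝔪^{(2)}, …)` is injective on multisegments. -/
theorem stmt11 (m m' : Multiset Seg)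
    (h : ∀ i : ℕ, 1 ≤ i → level m i = level m' i) : m = m' := by
  ext s0
  have h1 := count_eq m s0
  have h2 := count_eq m' s0
  rw [h _ (by have := s0.2; omega), h _ (by omega)] at h1
  omega
end

section
/- Let 𝔪 = {[a_1,b_1], …, [a_r,b_r]} be a multiset of integer segments, and let 𝔫 = {[a_1,c_1], …, [a_r,c_r]} with c_j ∈ {b_j − 1, b_j} for each j (discarding indices where c_j < a_j). Set δ = #{j : c_j = b_j − 1}. Let μ_𝔪 (resp. μ_𝔫) be the partition whose i-th part is #{j : b_j − a_j + 1 ≥ i} (resp. #{j : c_j − a_j + 1 ≥ i}). Then μ_𝔪 dominates the partition obtained by inserting δ into μ_𝔫 and sorting decreasingly. -/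
/-- Partial sum `μ_0 + ⋯ + μ_{k-1}` of a partition given as a function. -/
def partSum (μ : ℕ → ℕ) (k : ℕ) : ℕ := ∑ i ∈ Finset.range k, μ i

lemma partSum_succ (μ : ℕ → ℕ) (m : ℕ) : partSum μ (m + 1) = partSum μ m + μ m :=
  Finset.sum_range_succ μ m

lemma card_filter_range (k : ℕ) (L : ℤ) :
    ((Finset.range k).filter (fun i : ℕ => (i : ℤ) + 1 ≤ L)).card = min k L.toNat := by
  have h : (Finset.range k).filter (fun i : ℕ => (i : ℤ) + 1 ≤ L)
      = Finset.range (min k L.toNat) := by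
    ext i
    simp only [Finset.mem_filter, Finset.mem_range, lt_min_iff]
    omega
  rw [h, Finset.card_range]

lemma swap_count {r k : ℕ} (p : ℕ → Fin r → Prop) [∀ i j, Decidable (p i j)] :
    ∑ i ∈ Finset.range k, (Finset.univ.filter (p i)).card
      = ∑ j : Fin r, ((Finset.range k).filter (fun i => p i j)).card := by
  simp_rw [Finset.card_filter]
  exact Finset.sum_comm

/-- Let 𝔪 = {[a_j,b_j]} be a multiset of integer segments and 𝔫 = {[a_j,c_j]} with
`c_j ∈ {b_j - 1, b_j}` (degenerate segments with `c_j < a_j` contribute nothing).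
Let `δ = #{j : c_j = b_j - 1}` and let `μ_𝔪`, `μ_𝔫` be the conjugate partitions of the
lengths, i.e. `μ_𝔪 i = #{j : b_j - a_j + 1 ≥ i + 1}` (0-indexed).  Then `μ_𝔪` dominates
the partition obtained by inserting `δ` into `μ_𝔫` and sorting decreasingly (the sorted
insertion places `δ` at position `t = #{i : μ_𝔫 i > δ}`). -/
theorem stmt12 (r : ℕ) (a b c : Fin r → ℤ)
    (hab : ∀ j, a j ≤ b j) (hc : ∀ j, c j = b j ∨ c j = b j - 1)
    (μm μn : ℕ → ℕ)
    (hμm : ∀ i : ℕ, μm i = (Finset.univ.filter (fun j : Fin r => (i : ℤ) + 1 ≤ b j - a j + 1)).card)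
    (hμn : ∀ i : ℕ, μn i = (Finset.univ.filter (fun j : Fin r => (i : ℤ) + 1 ≤ c j - a j + 1)).card)
    (δ : ℕ) (hδ : δ = (Finset.univ.filter (fun j : Fin r => c j = b j - 1)).card)
    (t : ℕ) (ht : t = Nat.card {i : ℕ | δ < μn i}) :
    ∀ k : ℕ,
      partSum (fun i => if i < t then μn i else if i = t then δ else μn (i - 1)) k ≤
        partSum μm k := by
  clear ht
  set ν : ℕ → ℕ := fun i => if i < t then μn i else if i = t then δ else μn (i - 1) with hν
  have hνlt : ∀ i, i < t → ν i = μn i := fun i hi => by simp [hν, hi]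
  have hνt : ν t = δ := by simp [hν]
  have hνgt : ∀ i, t < i → ν i = μn (i - 1) := fun i hi => by
    simp only [hν]
    rw [if_neg (by omega), if_neg (by omega)]
  have keym : ∀ m, partSum μm m = ∑ j : Fin r, min m (b j - a j + 1).toNat := by
    intro m
    unfold partSum
    simp_rw [hμm]
    rw [swap_count]
    exact Finset.sum_congr rfl fun j _ => card_filter_range m _
  have keyn : ∀ m, partSum μn m = ∑ j : Fin r, min m (c j - a j + 1).toNat := by
    intro m
    unfold partSum
    simp_rw [hμn]
    rw [swap_count]
    exact Finset.sum_congr rfl fun j _ => card_filter_range m _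
  have hmono : ∀ i, μn i ≤ μm i := by
    intro i
    rw [hμm, hμn]
    apply Finset.card_le_card
    intro j hj
    simp only [Finset.mem_filter, Finset.mem_univ, true_and] at hj ⊢
    have := hc j
    omega
  -- key inequality for k ≥ 1
  have hkey : ∀ k : ℕ, 1 ≤ k → δ + partSum μn (k - 1) ≤ partSum μm k := by
    intro k hk
    rw [keym, keyn, hδ, Finset.card_filter, ← Finset.sum_add_distrib]
    apply Finset.sum_le_sum
    intro j _
    have h1 := hab j
    rcases hc j with h | h
    · rw [if_neg (by omega), h]
      omega
    · rw [if_pos h, h]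
      omega
  have hfirst : ∀ m, m ≤ t → partSum ν m = partSum μn m := by
    intro m hm
    unfold partSum
    apply Finset.sum_congr rfl
    intro i hi
    simp only [Finset.mem_range] at hi
    exact hνlt i (by omega)
  intro k
  by_cases hk : k ≤ t
  · rw [hfirst k hk]
    exact Finset.sum_le_sum fun i _ => hmono i
  · push_neg at hk
    have hval : ∀ m, t < m → partSum ν m = δ + partSum μn (m - 1) := by
      intro m hm
      induction m with
      | zero => omega
      | succ n ih =>
        rcases Nat.lt_or_ge t n with h | h
        · have hn1 : n - 1 + 1 = n := by omega
          rw [partSum_succ, ih h, hνgt n h, Nat.succ_sub_one]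
          have h2 := partSum_succ μn (n - 1)
          rw [hn1] at h2
          omega
        · have hnt : n = t := by omega
          subst hnt
          rw [partSum_succ, hfirst n le_rfl, hνt, Nat.succ_sub_one]
          omega
    rw [hval k hk]
    exact hkey k (by omega)
end

section
/- Let R be a commutative ring, ξ ∈ R a unit, and n ≥ 1. There is a unique R-algebra homomorphism ♭ from the affine Hecke algebra H_R(n, ξ) to itself with S_i ↦ S_{n−i} for 1 ≤ i ≤ n−1 and X_j ↦ X_{n+1−j}^{-1} for 1 ≤ j ≤ n, and this homomorphism is an involution (♭ ∘ ♭ = id). -/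
open FreeAlgebra

/-- The condition that an `R`-algebra endomorphism `φ` of `H_R(n, ξ)` sends
`S_i ↦ S_{n-i}` and `X_j ↦ X_{n+1-j}^{-1}` (1-indexed; 0-indexed: `S_i ↦ S_{n-2-i}`,
`X_j ↦ Xinv_{n-1-j}`). -/
def FlipGen (R : Type*) [CommRing R] (ξ : R) (n : ℕ)
    (φ : HeckeAlgebra R ξ n →ₐ[R] HeckeAlgebra R ξ n) : Prop :=
  (∀ i : Fin (n - 1),
      φ (eS R ξ n i) = eS R ξ n ⟨n - 2 - (i : ℕ), by have := i.isLt; omega⟩) ∧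
  (∀ j : Fin n,
      φ (eX R ξ n j) = eXinv R ξ n ⟨n - 1 - (j : ℕ), by have := j.isLt; omega⟩)

namespace HeckeFlip

variable {R : Type*} [CommRing R] (ξ : Rˣ) (n : ℕ)

local notation "𝕊" i => eS R (ξ : R) n i
local notation "𝕏" j => eX R (ξ : R) n j
local notation "𝕏⁻" j => eXinv R (ξ : R) n j
local notation "c" => algebraMap R (HeckeAlgebra R (ξ : R) n) (ξ : R)

theorem rel {x y : FreeAlgebra R (HGen n)} (h : HeckeRel R (ξ : R) n x y) :
    RingQuot.mkAlgHom R (HeckeRel R (ξ : R) n) x =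
      RingQuot.mkAlgHom R (HeckeRel R (ξ : R) n) y :=
  RingQuot.mkAlgHom_rel R h

theorem quadA (i : Fin (n - 1)) : ((𝕊 i) + 1) * ((𝕊 i) - c) = 0 := by
  simpa [eS] using rel ξ n (HeckeRel.quad i)

theorem scommA (i j : Fin (n - 1)) (h : (i : ℕ) + 2 ≤ (j : ℕ) ∨ (j : ℕ) + 2 ≤ (i : ℕ)) :
    (𝕊 i) * (𝕊 j) = (𝕊 j) * (𝕊 i) := by
  simpa [eS] using rel ξ n (HeckeRel.scomm i j h)

theorem braidA (i j : Fin (n - 1)) (h : (j : ℕ) = (i : ℕ) + 1) :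
    (𝕊 i) * (𝕊 j) * (𝕊 i) = (𝕊 j) * (𝕊 i) * (𝕊 j) := by
  simpa [eS] using rel ξ n (HeckeRel.braid i j h)

theorem xcommA (i j : Fin n) : (𝕏 i) * (𝕏 j) = (𝕏 j) * (𝕏 i) := by
  simpa [eX] using rel ξ n (HeckeRel.xcomm i j)

theorem xsA (j : Fin n) (i : Fin (n - 1)) (h : (j : ℕ) ≠ (i : ℕ) ∧ (j : ℕ) ≠ (i : ℕ) + 1) :
    (𝕏 j) * (𝕊 i) = (𝕊 i) * (𝕏 j) := by
  simpa [eX, eS] using rel ξ n (HeckeRel.xs j i h)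

theorem sxsA (i : Fin (n - 1)) (j j' : Fin n) (hj : (j : ℕ) = (i : ℕ))
    (hj' : (j' : ℕ) = (i : ℕ) + 1) :
    (𝕊 i) * (𝕏 j) * (𝕊 i) = c * (𝕏 j') := by
  simpa [eX, eS] using rel ξ n (HeckeRel.sxs i j j' hj hj')

theorem xinv_rightA (j : Fin n) : (𝕏 j) * (𝕏⁻ j) = 1 := by
  simpa [eX, eXinv] using rel ξ n (HeckeRel.xinv_right j)

theorem xinv_leftA (j : Fin n) : (𝕏⁻ j) * (𝕏 j) = 1 := by
  simpa [eX, eXinv] using rel ξ n (HeckeRel.xinv_left j)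

/-- `X_j` as a unit. -/
def xU (j : Fin n) : (HeckeAlgebra R (ξ : R) n)ˣ :=
  ⟨eX R (ξ : R) n j, eXinv R (ξ : R) n j, xinv_rightA ξ n j, xinv_leftA ξ n j⟩

/-- `ξ` as a central unit. -/
def cU : (HeckeAlgebra R (ξ : R) n)ˣ :=
  Units.map (algebraMap R (HeckeAlgebra R (ξ : R) n)).toMonoidHom ξ

theorem cU_comm (a : HeckeAlgebra R (ξ : R) n) : (cU ξ n : _) * a = a * cU ξ n :=
  Algebra.commutes _ _

/-- `S_i` as a unit. -/
def sU (i : Fin (n - 1)) : (HeckeAlgebra R (ξ : R) n)ˣ where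
  val := 𝕊 i
  inv := ((ξ⁻¹ : Rˣ) : R) • ((𝕊 i) + 1 - c)
  val_inv := by
    have h1 : (𝕊 i) * ((𝕊 i) + 1 - c) = c := by
      have q := quadA ξ n i
      have e : (𝕊 i) * ((𝕊 i) + 1 - c) - c = ((𝕊 i) + 1) * ((𝕊 i) - c) := by noncomm_ring
      rw [q] at e
      exact sub_eq_zero.mp e
    rw [mul_smul_comm, h1, Algebra.algebraMap_eq_smul_one, smul_smul, Units.inv_mul, one_smul]
  inv_val := by
    have hsc : Commute (𝕊 i) c := (Algebra.commutes _ _).symm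
    have hcom : Commute (𝕊 i) ((𝕊 i) + 1 - c) :=
      (((Commute.refl _).add_right (Commute.one_right _)).sub_right hsc)
    have h1 : (𝕊 i) * ((𝕊 i) + 1 - c) = c := by
      have q := quadA ξ n i
      have e : (𝕊 i) * ((𝕊 i) + 1 - c) - c = ((𝕊 i) + 1) * ((𝕊 i) - c) := by noncomm_ring
      rw [q] at e
      exact sub_eq_zero.mp e
    rw [smul_mul_assoc, ← hcom.eq, h1, Algebra.algebraMap_eq_smul_one, smul_smul,
      Units.inv_mul, one_smul]

theorem xixiA (i j : Fin n) : (𝕏⁻ i) * (𝕏⁻ j) = (𝕏⁻ j) * (𝕏⁻ i) := by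
  have h : Commute ((xU ξ n i : _) : HeckeAlgebra R (ξ : R) n) (xU ξ n j) := xcommA ξ n i j
  simpa [xU] using (h.units_inv_left.units_inv_right).eq

theorem xisA (j : Fin n) (i : Fin (n - 1)) (h : (j : ℕ) ≠ (i : ℕ) ∧ (j : ℕ) ≠ (i : ℕ) + 1) :
    (𝕏⁻ j) * (𝕊 i) = (𝕊 i) * (𝕏⁻ j) := by
  have hc : Commute ((xU ξ n j : _) : HeckeAlgebra R (ξ : R) n) (𝕊 i) := xsA ξ n j i h
  simpa [xU] using hc.units_inv_left.eq

theorem sxisA (i : Fin (n - 1)) (j j' : Fin n) (hj : (j : ℕ) = (i : ℕ))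
    (hj' : (j' : ℕ) = (i : ℕ) + 1) :
    (𝕊 i) * (𝕏⁻ j') * (𝕊 i) = c * (𝕏⁻ j) := by
  have hU : (sU ξ n i) * (xU ξ n j) * (sU ξ n i) = (cU ξ n) * (xU ξ n j') :=
    Units.ext (by simpa [sU, xU, cU] using sxsA ξ n i j j' hj hj')
  have hXj' : xU ξ n j' = (cU ξ n)⁻¹ * ((sU ξ n i) * (xU ξ n j) * (sU ξ n i)) := by
    rw [hU]; group
  have key : (sU ξ n i) * (xU ξ n j')⁻¹ * (sU ξ n i) = (cU ξ n) * (xU ξ n j)⁻¹ := by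
    rw [hXj']
    have hc1 : Commute (cU ξ n) (sU ξ n i) := Units.ext (cU_comm ξ n _)
    have hcx : Commute (cU ξ n) (xU ξ n j) := Units.ext (cU_comm ξ n _)
    have hc2 : Commute (cU ξ n) (xU ξ n j)⁻¹ := hcx.inv_right
    calc (sU ξ n i) * ((cU ξ n)⁻¹ * ((sU ξ n i) * (xU ξ n j) * (sU ξ n i)))⁻¹ * (sU ξ n i)
        = (xU ξ n j)⁻¹ * ((sU ξ n i)⁻¹ * ((cU ξ n) * (sU ξ n i))) := by group
      _ = (xU ξ n j)⁻¹ * ((sU ξ n i)⁻¹ * ((sU ξ n i) * (cU ξ n))) := by rw [hc1.eq]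
      _ = (xU ξ n j)⁻¹ * (cU ξ n) := by group
      _ = (cU ξ n) * (xU ξ n j)⁻¹ := hc2.symm.eq
  have := congrArg (Units.val) key
  simpa [sU, xU, cU, Units.val_mul] using this

def flipFun : HGen n → HeckeAlgebra R (ξ : R) n
  | .S i => eS R (ξ : R) n ⟨n - 2 - (i : ℕ), by have := i.isLt; omega⟩
  | .X j => eXinv R (ξ : R) n ⟨n - 1 - (j : ℕ), by have := j.isLt; omega⟩
  | .Xinv j => eX R (ξ : R) n ⟨n - 1 - (j : ℕ), by have := j.isLt; omega⟩

theorem flip_rel : ∀ ⦃x y : FreeAlgebra R (HGen n)⦄, HeckeRel R (ξ : R) n x y →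
    FreeAlgebra.lift R (flipFun ξ n) x = FreeAlgebra.lift R (flipFun ξ n) y := by
  intro x y h
  induction h with
  | quad i =>
      simpa [flipFun] using quadA ξ n ⟨n - 2 - (i : ℕ), by have := i.isLt; omega⟩
  | scomm i j h =>
      have hi := i.isLt; have hj := j.isLt
      simpa [flipFun] using scommA ξ n ⟨n - 2 - (i : ℕ), by omega⟩ ⟨n - 2 - (j : ℕ), by omega⟩
        (by simp only [Fin.val_mk] at *; omega)
  | braid i j h =>
      have hi := i.isLt; have hj := j.isLt
      simpa [flipFun] using (braidA ξ n ⟨n - 2 - (j : ℕ), by omega⟩ ⟨n - 2 - (i : ℕ), by omega⟩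
        (by simp only [Fin.val_mk] at *; omega)).symm
  | xcomm i j =>
      have hi := i.isLt; have hj := j.isLt
      simpa [flipFun] using xixiA ξ n ⟨n - 1 - (i : ℕ), by omega⟩ ⟨n - 1 - (j : ℕ), by omega⟩
  | xs j i h =>
      have hi := i.isLt; have hj := j.isLt
      simpa [flipFun] using xisA ξ n ⟨n - 1 - (j : ℕ), by omega⟩ ⟨n - 2 - (i : ℕ), by omega⟩
        (by constructor <;> (simp only [Fin.val_mk] at *; omega))
  | sxs i j j' hj hj' =>
      have hi := i.isLt; have hjl := j.isLt; have hj'l := j'.isLt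
      simpa [flipFun] using sxisA ξ n ⟨n - 2 - (i : ℕ), by omega⟩
        ⟨n - 1 - (j' : ℕ), by omega⟩ ⟨n - 1 - (j : ℕ), by omega⟩
        (by simp only [Fin.val_mk] at *; omega) (by simp only [Fin.val_mk] at *; omega)
  | xinv_right j =>
      have hj := j.isLt
      simpa [flipFun] using xinv_leftA ξ n ⟨n - 1 - (j : ℕ), by omega⟩
  | xinv_left j =>
      have hj := j.isLt
      simpa [flipFun] using xinv_rightA ξ n ⟨n - 1 - (j : ℕ), by omega⟩

noncomputable def flip : HeckeAlgebra R (ξ : R) n →ₐ[R] HeckeAlgebra R (ξ : R) n :=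
  RingQuot.liftAlgHom R ⟨FreeAlgebra.lift R (flipFun ξ n), flip_rel ξ n⟩

theorem flip_flipGen : FlipGen R (ξ : R) n (flip ξ n) :=
  ⟨fun i => by simp [eS, flip, RingQuot.liftAlgHom_mkAlgHom_apply, flipFun],
   fun j => by simp [eX, flip, RingQuot.liftAlgHom_mkAlgHom_apply, flipFun]⟩

theorem heckeExt {φ ψ : HeckeAlgebra R (ξ : R) n →ₐ[R] HeckeAlgebra R (ξ : R) n}
    (hS : ∀ i, φ (𝕊 i) = ψ (𝕊 i)) (hX : ∀ j, φ (𝕏 j) = ψ (𝕏 j))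
    (hXi : ∀ j, φ (𝕏⁻ j) = ψ (𝕏⁻ j)) : φ = ψ := by
  have h : φ.comp (RingQuot.mkAlgHom R (HeckeRel R (ξ : R) n)) =
      ψ.comp (RingQuot.mkAlgHom R (HeckeRel R (ξ : R) n)) :=
    FreeAlgebra.hom_ext (funext fun g => by
      cases g with
      | S i => simpa [eS] using hS i
      | X j => simpa [eX] using hX j
      | Xinv j => simpa [eXinv] using hXi j)
  apply AlgHom.ext; intro x
  obtain ⟨y, rfl⟩ := RingQuot.mkAlgHom_surjective R (HeckeRel R (ξ : R) n) x
  exact DFunLike.congr_fun h y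

theorem flipGen_eXinv {φ : HeckeAlgebra R (ξ : R) n →ₐ[R] HeckeAlgebra R (ξ : R) n}
    (hφ : FlipGen R (ξ : R) n φ) (j : Fin n) :
    φ (𝕏⁻ j) = eX R (ξ : R) n ⟨n - 1 - (j : ℕ), by have := j.isLt; omega⟩ := by
  set a : Fin n := ⟨n - 1 - (j : ℕ), by have := j.isLt; omega⟩ with ha
  have h1 : (𝕏⁻ a) * φ (𝕏⁻ j) = 1 := by
    have h2 := congrArg φ (xinv_rightA ξ n j)
    rw [map_mul, map_one, hφ.2 j] at h2
    exact h2
  calc φ (𝕏⁻ j) = ((𝕏 a) * (𝕏⁻ a)) * φ (𝕏⁻ j) := by rw [xinv_rightA, one_mul]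
    _ = (𝕏 a) * ((𝕏⁻ a) * φ (𝕏⁻ j)) := by rw [mul_assoc]
    _ = 𝕏 a := by rw [h1, mul_one]

theorem flipGen_invol {φ : HeckeAlgebra R (ξ : R) n →ₐ[R] HeckeAlgebra R (ξ : R) n}
    (hφ : FlipGen R (ξ : R) n φ) : φ.comp φ = AlgHom.id R (HeckeAlgebra R (ξ : R) n) := by
  apply heckeExt
  · intro i
    have hi := i.isLt
    simp only [AlgHom.comp_apply, AlgHom.id_apply, hφ.1 i,
      hφ.1 ⟨n - 2 - (i : ℕ), by omega⟩]
    exact congrArg (eS R (ξ : R) n) (Fin.ext (by simp only [Fin.val_mk]; omega))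
  · intro j
    have hj := j.isLt
    simp only [AlgHom.comp_apply, AlgHom.id_apply, hφ.2 j,
      flipGen_eXinv ξ n hφ ⟨n - 1 - (j : ℕ), by omega⟩]
    exact congrArg (eX R (ξ : R) n) (Fin.ext (by simp only [Fin.val_mk]; omega))
  · intro j
    have hj := j.isLt
    simp only [AlgHom.comp_apply, AlgHom.id_apply, flipGen_eXinv ξ n hφ j,
      hφ.2 ⟨n - 1 - (j : ℕ), by omega⟩]
    exact congrArg (eXinv R (ξ : R) n) (Fin.ext (by simp only [Fin.val_mk]; omega))

end HeckeFlip

/-- There is a unique `R`-algebra homomorphism `♭ : H_R(n, ξ) → H_R(n, ξ)` with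
`S_i ↦ S_{n-i}` and `X_j ↦ X_{n+1-j}^{-1}`, and this homomorphism is an involution. -/
theorem stmt16 (R : Type*) [CommRing R] (ξ : Rˣ) (n : ℕ) :
    (∃! φ : HeckeAlgebra R (ξ : R) n →ₐ[R] HeckeAlgebra R (ξ : R) n,
        FlipGen R (ξ : R) n φ) ∧
    (∀ φ : HeckeAlgebra R (ξ : R) n →ₐ[R] HeckeAlgebra R (ξ : R) n,
        FlipGen R (ξ : R) n φ → ∀ x, φ (φ x) = x) := by
  constructor
  · refine ⟨HeckeFlip.flip ξ n, HeckeFlip.flip_flipGen ξ n, fun ψ hψ => ?_⟩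
    apply HeckeFlip.heckeExt ξ n
    · intro i; rw [hψ.1 i, (HeckeFlip.flip_flipGen ξ n).1 i]
    · intro j; rw [hψ.2 j, (HeckeFlip.flip_flipGen ξ n).2 j]
    · intro j
      rw [HeckeFlip.flipGen_eXinv ξ n hψ j,
        HeckeFlip.flipGen_eXinv ξ n (HeckeFlip.flip_flipGen ξ n) j]
  · intro φ hφ x
    exact DFunLike.congr_fun (HeckeFlip.flipGen_invol ξ n hφ) x
end
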